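/- arXiv:1506.04347 — 3 statements merged into one kernel-verified Lean document; each statement's English description precedes it below -/
import Mathlib

section
/- For z > 0, the Bessel-type integral K_{1/2}(z) := ∫_0^∞ u^{0} e^{-(z/2)(1/u² + u²)} du, i.e. ∫_0^∞ u^{2·(1/2)-1} e^{-(z/2)(u^{-2}+u²)} du, equals √(π/2) · z^{-1/2} · e^{-z}. -/
open Real MeasureTheory Set

/-!
The map `u ↦ u - u⁻¹` is an increasing bijection of `(0, ∞)` onto `ℝ` with Jacobian `1 + u⁻²`,
and the inversion `u ↦ u⁻¹` turns `f (-(u - u⁻¹))` into `u⁻² f (u - u⁻¹)`. Hence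
`∫₀^∞ (f (u - u⁻¹) + f (-(u - u⁻¹))) du = ∫ f` (Cauchy–Schlömilch), so for even `f` the left-hand
integral is half of `∫ f`. Since `u⁻² + u² = (u - u⁻¹)² + 2`, the Bessel integral is
`e^{-z}` times half the Gaussian integral `∫ exp (-(z/2) x²) dx = √(2π/z)`.
-/

section CauchySchlomilch

variable {E : Type*} [NormedAddCommGroup E] [NormedSpace ℝ E]

lemma hasDerivAt_sub_inv {u : ℝ} (hu : u ≠ 0) :
    HasDerivAt (fun x : ℝ => x - x⁻¹) (1 + (u⁻¹) ^ 2) u :=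
  ((hasDerivAt_id' u).sub (hasDerivAt_inv hu)).congr_deriv (by rw [inv_pow]; ring)

lemma strictMonoOn_sub_inv : StrictMonoOn (fun x : ℝ => x - x⁻¹) (Ioi 0) := by
  intro a ha b _ hab
  have : b⁻¹ < a⁻¹ := inv_strictAnti₀ ha hab
  dsimp only
  linarith

lemma image_sub_inv_Ioi : (fun x : ℝ => x - x⁻¹) '' Ioi 0 = univ := by
  refine eq_univ_of_forall fun t => ?_
  -- the positive root of `u ^ 2 - t * u - 1 = 0`
  set s := √(t ^ 2 + 4)
  have hs : s ^ 2 = t ^ 2 + 4 := sq_sqrt (by positivity)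
  have hts : 0 < t + s := by nlinarith [sqrt_nonneg (t ^ 2 + 4)]
  have hinv : ((t + s) / 2)⁻¹ = (s - t) / 2 := by
    rw [inv_eq_of_mul_eq_one_right]
    nlinarith
  exact ⟨(t + s) / 2, by simp only [mem_Ioi]; linarith, by simp only [hinv]; ring⟩

lemma integral_Ioi_smul_comp_sub_inv (f : ℝ → E) :
    ∫ u in Ioi 0, (1 + (u⁻¹) ^ 2) • f (u - u⁻¹) = ∫ x, f x := by
  have h := integral_image_eq_integral_abs_deriv_smul measurableSet_Ioi
    (fun u hu => (hasDerivAt_sub_inv (ne_of_gt hu)).hasDerivWithinAt)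
    strictMonoOn_sub_inv.injOn f
  rw [image_sub_inv_Ioi, Measure.restrict_univ] at h
  rw [h]
  refine setIntegral_congr_fun measurableSet_Ioi fun u _ => ?_
  rw [abs_of_pos (by positivity)]

lemma integrableOn_Ioi_smul_comp_sub_inv {f : ℝ → E} (hf : Integrable f) :
    IntegrableOn (fun u => (1 + (u⁻¹) ^ 2) • f (u - u⁻¹)) (Ioi 0) := by
  have h := integrableOn_image_iff_integrableOn_abs_deriv_smul measurableSet_Ioi
    (fun u hu => (hasDerivAt_sub_inv (ne_of_gt hu)).hasDerivWithinAt)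
    strictMonoOn_sub_inv.injOn f
  rw [image_sub_inv_Ioi, integrableOn_univ] at h
  refine (h.mp hf).congr_fun (fun u _ => ?_) measurableSet_Ioi
  simp only [abs_of_pos (by positivity : 0 < 1 + u⁻¹ ^ 2)]

lemma integrableOn_Ioi_smul_comp_sub_inv_of_le {f : ℝ → E} (hf : Integrable f) {a : ℝ → ℝ}
    (ha : Measurable a) (ha_nonneg : ∀ u, 0 ≤ a u) (ha_le : ∀ u, a u ≤ 1 + (u⁻¹) ^ 2) :
    IntegrableOn (fun u => a u • f (u - u⁻¹)) (Ioi 0) := by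
  have hpos : ∀ u : ℝ, 0 < 1 + (u⁻¹) ^ 2 := fun u => by positivity
  have hw : Measurable fun u : ℝ => a u / (1 + (u⁻¹) ^ 2) := by fun_prop
  have h : IntegrableOn
      (fun u => (a u / (1 + (u⁻¹) ^ 2)) • (1 + (u⁻¹) ^ 2) • f (u - u⁻¹)) (Ioi 0) := by
    refine (integrableOn_Ioi_smul_comp_sub_inv hf).bdd_smul 1 hw.aestronglyMeasurable
      (Filter.Eventually.of_forall fun u => ?_)
    rw [norm_div, Real.norm_of_nonneg (ha_nonneg u), Real.norm_of_nonneg (hpos u).le]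
    exact div_le_one_of_le₀ (ha_le u) (hpos u).le
  refine h.congr_fun (fun u _ => ?_) measurableSet_Ioi
  simp only [smul_smul, div_mul_cancel₀ _ (hpos u).ne']

lemma integrableOn_Ioi_comp_sub_inv {f : ℝ → E} (hf : Integrable f) :
    IntegrableOn (fun u => f (u - u⁻¹)) (Ioi 0) := by
  simpa using integrableOn_Ioi_smul_comp_sub_inv_of_le hf (a := fun _ => 1) measurable_const
    (fun _ => zero_le_one) (fun u => le_add_of_nonneg_right (sq_nonneg _))

lemma integral_Ioi_comp_neg_sub_inv (f : ℝ → E) :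
    ∫ u in Ioi 0, f (-(u - u⁻¹)) = ∫ u in Ioi 0, (u⁻¹) ^ 2 • f (u - u⁻¹) := by
  have h := integral_image_eq_integral_abs_deriv_smul measurableSet_Ioi
    (fun u hu => (hasDerivAt_inv (ne_of_gt hu)).hasDerivWithinAt) inv_injective.injOn
    (fun u => f (-(u - u⁻¹)))
  have himage : Inv.inv '' Ioi (0 : ℝ) = Ioi 0 := by
    ext x; simp
  rw [himage] at h
  rw [h]
  refine setIntegral_congr_fun measurableSet_Ioi fun u (hu : 0 < u) => ?_
  rw [abs_neg, abs_of_pos (by positivity), inv_pow, inv_inv, neg_sub]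

theorem integral_Ioi_comp_sub_inv_add_comp_neg {f : ℝ → E} (hf : Integrable f) :
    ∫ u in Ioi 0, (f (u - u⁻¹) + f (-(u - u⁻¹))) = ∫ x, f x := by
  have hφ := integrableOn_Ioi_comp_sub_inv hf
  have hφ_neg := integrableOn_Ioi_comp_sub_inv hf.comp_neg
  have hφ_inv_sq := integrableOn_Ioi_smul_comp_sub_inv_of_le hf (a := fun u => (u⁻¹) ^ 2)
    (by fun_prop) (fun _ => sq_nonneg _) (fun _ => le_add_of_nonneg_left zero_le_one)
  calc ∫ u in Ioi 0, (f (u - u⁻¹) + f (-(u - u⁻¹)))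
      = (∫ u in Ioi 0, f (u - u⁻¹)) + ∫ u in Ioi 0, (u⁻¹) ^ 2 • f (u - u⁻¹) := by
        rw [integral_add hφ hφ_neg, integral_Ioi_comp_neg_sub_inv]
    _ = ∫ u in Ioi 0, (1 + (u⁻¹) ^ 2) • f (u - u⁻¹) := by
        simp only [← integral_add hφ hφ_inv_sq, add_smul, one_smul]
    _ = ∫ x, f x := integral_Ioi_smul_comp_sub_inv f

theorem integral_Ioi_comp_sub_inv_of_even {f : ℝ → E} (hf : Integrable f)
    (heven : ∀ x, f (-x) = f x) :
    (2 : ℝ) • ∫ u in Ioi 0, f (u - u⁻¹) = ∫ x, f x := by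
  simp only [← integral_Ioi_comp_sub_inv_add_comp_neg hf, heven, ← two_smul ℝ, integral_smul]

end CauchySchlomilch

lemma integral_Ioi_exp_neg_mul_sub_inv_sq {b : ℝ} (hb : 0 < b) :
    ∫ u in Ioi 0, exp (-b * (u - u⁻¹) ^ 2) = √(π / b) / 2 := by
  have h := integral_Ioi_comp_sub_inv_of_even (integrable_exp_neg_mul_sq hb)
    (fun x => by rw [neg_sq])
  rw [integral_gaussian, smul_eq_mul] at h
  linarith

theorem bessel_half (z : ℝ) (hz : 0 < z) :
    ∫ u in Set.Ioi (0:ℝ), u ^ (2 * (1/2 : ℝ) - 1) * Real.exp (-(z/2) * (u⁻¹^2 + u^2))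
      = Real.sqrt (π/2) * z ^ (-(1/2) : ℝ) * Real.exp (-z) := by
  have hintegrand : ∀ u ∈ Ioi (0 : ℝ), u ^ (2 * (1/2 : ℝ) - 1) * exp (-(z/2) * (u⁻¹^2 + u^2))
      = exp (-z) * exp (-(z / 2) * (u - u⁻¹) ^ 2) := fun u (hu : 0 < u) => by
    rw [← exp_add, show (2 * (1/2 : ℝ) - 1) = 0 by norm_num, rpow_zero, one_mul]
    congr 1
    field_simp
    ring
  rw [setIntegral_congr_fun measurableSet_Ioi hintegrand, integral_const_mul,
    integral_Ioi_exp_neg_mul_sub_inv_sq (half_pos hz), rpow_neg hz.le, ← sqrt_eq_rpow,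
    show π / (z / 2) = 2 ^ 2 * (π / 2) / z by field_simp, sqrt_div' _ hz.le,
    sqrt_mul (by positivity), sqrt_sq zero_le_two]
  ring
end

section
/- Let S ⊂ Sym(3,ℝ) be the linear space of symmetric 3×3 matrices K with k₁₃ = k₂₃, and let P = {K ∈ S : K positive definite}. Then the dual cone P* = {D ∈ S : ⟨K, D⟩ > 0 for all K ∈ closure(P) \ {0}} equals {D ∈ S : d₁₃ = d₂₃, d₁₁ > 0, d₂₂ > 0, d₃₃ > 0, d₁₂² < d₁₁ d₂₂, 4 d₁₃² < (d₁₁ + d₂₂ + 2 d₁₂) d₃₃}. -/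
/-!
The closure of `P` is `S ∩ PSD`: a positive semidefinite `K ∈ S` is the limit of `K + ε • 1 ∈ P`.
Testing `D` against the rank-one matrices `v vᵀ ∈ S` (those with `v₀ = v₁` or `v₂ = 0`) gives
the five inequalities. Conversely, under these inequalities adding a suitable multiple of
`E₀₂ + E₂₀ - E₁₂ - E₂₁`, which is orthogonal to `S`, turns `D` into a positive definite `Y`,
and `tr (K Y) > 0` for every nonzero positive semidefinite `K`.
-/

open Matrix Filter Topology

namespace Matrix

variable {n : Type*} [Fintype n]

theorem isClosed_setOf_posSemidef : IsClosed {A : Matrix n n ℝ | A.PosSemidef} := by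
  simp only [posSemidef_iff_dotProduct_mulVec, Set.ofPred_and, Set.ofPred_forall]
  exact (isClosed_eq continuous_id.matrix_conjTranspose continuous_id).inter <|
    isClosed_iInter fun x => isClosed_le continuous_const <|
      continuous_const.dotProduct (continuous_id.matrix_mulVec continuous_const)

theorem PosSemidef.trace_mul_pos {K Y : Matrix n n ℝ} (hK : K.PosSemidef) (hK0 : K ≠ 0)
    (hY : Y.PosDef) : 0 < (K * Y).trace := by
  classical
  obtain ⟨B, rfl⟩ : ∃ B : Matrix n n ℝ, K = Bᴴ * B := by
    open scoped MatrixOrder in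
    exact CStarAlgebra.nonneg_iff_eq_star_mul_self.mp hK.nonneg
  have hB : B ≠ 0 := by rintro rfl; simp at hK0
  obtain ⟨i, hi⟩ := Function.ne_iff.mp hB
  have htrace : (Bᴴ * B * Y).trace = ∑ j, star (B j) ⬝ᵥ Y *ᵥ B j := by
    rw [Matrix.mul_assoc, trace_mul_comm]
    simp [trace, mul_apply, dotProduct, mulVec, Finset.mul_sum, mul_assoc]
  rw [htrace]
  exact Finset.sum_pos' (fun j _ => hY.posSemidef.dotProduct_mulVec_nonneg (B j))
    ⟨i, Finset.mem_univ i, hY.dotProduct_mulVec_pos hi⟩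

theorem closure_setOf_mem_and_posDef [DecidableEq n] (W : Submodule ℝ (Matrix n n ℝ))
    (hW : (1 : Matrix n n ℝ) ∈ W) :
    closure {K | K ∈ W ∧ K.PosDef} = {K | K ∈ W ∧ K.PosSemidef} := by
  refine subset_antisymm (closure_minimal (fun K hK => ⟨hK.1, hK.2.posSemidef⟩)
    (W.closed_of_finiteDimensional.inter isClosed_setOf_posSemidef)) ?_
  rintro K ⟨hKW, hK : K.PosSemidef⟩
  have hlim : Tendsto (fun ε : ℝ => K + ε • 1) (𝓝[>] 0) (𝓝 K) := by
    have hcont : Continuous fun ε : ℝ => K + ε • (1 : Matrix n n ℝ) := by fun_prop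
    simpa using (hcont.tendsto 0).mono_left nhdsWithin_le_nhds
  refine mem_closure_of_tendsto hlim (eventually_nhdsWithin_of_forall fun ε (hε : 0 < ε) => ?_)
  exact ⟨W.add_mem hKW (W.smul_mem ε hW), PosDef.posSemidef_add hK (PosDef.one.smul hε)⟩

end Matrix

def twoEdgeSubspace : Submodule ℝ (Matrix (Fin 3) (Fin 3) ℝ) where
  carrier := {K | K.IsSymm ∧ K 0 2 = K 1 2}
  add_mem' := fun ⟨hA, hA'⟩ ⟨hB, hB'⟩ => ⟨hA.add hB, by simp [hA', hB']⟩
  zero_mem' := ⟨isSymm_zero, rfl⟩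
  smul_mem' := fun c _ ⟨hA, hA'⟩ => ⟨hA.smul c, by simp [hA']⟩

def twoEdgeMatrix (p q s r t : ℝ) : Matrix (Fin 3) (Fin 3) ℝ :=
  !![p, q, r; q, s, r; r, r, t]

theorem twoEdgeMatrix_mem (p q s r t : ℝ) : twoEdgeMatrix p q s r t ∈ twoEdgeSubspace :=
  ⟨by ext i j; fin_cases i <;> fin_cases j <;> rfl, rfl⟩

theorem mem_twoEdgeSubspace_iff {K : Matrix (Fin 3) (Fin 3) ℝ} :
    K ∈ twoEdgeSubspace ↔ K = twoEdgeMatrix (K 0 0) (K 0 1) (K 1 1) (K 0 2) (K 2 2) := by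
  refine ⟨fun ⟨hK, hK'⟩ => ?_, fun hK => hK ▸ twoEdgeMatrix_mem _ _ _ _ _⟩
  ext i j
  fin_cases i <;> fin_cases j <;>
    simp [twoEdgeMatrix, hK', hK.apply 0 1, hK.apply 0 2, hK.apply 1 2]

theorem one_mem_twoEdgeSubspace : (1 : Matrix (Fin 3) (Fin 3) ℝ) ∈ twoEdgeSubspace :=
  ⟨isSymm_one, rfl⟩

theorem trace_twoEdgeMatrix_mul_twoEdgeMatrix (a b c d e p q s r t : ℝ) :
    (twoEdgeMatrix a b c d e * twoEdgeMatrix p q s r t).trace =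
      a * p + 2 * b * q + c * s + 4 * d * r + e * t := by
  simp [twoEdgeMatrix, trace_fin_three]
  ring

/-- `σ • twoEdgeMatrix p q s r t + r (p - s) • (E₀₂ + E₂₀ - E₁₂ - E₂₁)` with `σ = p + s + 2q`;
the correction is orthogonal to `twoEdgeSubspace`, and the factor `σ` clears denominators. -/
def twoEdgeLift (p q s r t : ℝ) : Matrix (Fin 3) (Fin 3) ℝ :=
  let σ := p + s + 2 * q
  !![σ * p, σ * q, 2 * r * (p + q); σ * q, σ * s, 2 * r * (q + s);
    2 * r * (p + q), 2 * r * (q + s), σ * t]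

theorem trace_twoEdgeMatrix_mul_twoEdgeLift (a b c d e p q s r t : ℝ) :
    (twoEdgeMatrix a b c d e * twoEdgeLift p q s r t).trace =
      (p + s + 2 * q) * (twoEdgeMatrix a b c d e * twoEdgeMatrix p q s r t).trace := by
  simp [twoEdgeMatrix, twoEdgeLift, trace_fin_three]
  ring

theorem dotProduct_twoEdgeLift_mulVec (p q s r t : ℝ) (x : Fin 3 → ℝ) :
    x ⬝ᵥ twoEdgeLift p q s r t *ᵥ x =
      ((p + q) * x 0 + (q + s) * x 1 + 2 * r * x 2) ^ 2 + (p * s - q ^ 2) * (x 0 - x 1) ^ 2 +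
        ((p + s + 2 * q) * t - 4 * r ^ 2) * x 2 ^ 2 := by
  simp [twoEdgeLift, dotProduct, mulVec, Fin.sum_univ_three]
  ring

theorem posDef_twoEdgeLift {p q s r t : ℝ} (hσ : 0 < p + s + 2 * q) (hΔ : q ^ 2 < p * s)
    (hT : 4 * r ^ 2 < (p + s + 2 * q) * t) : (twoEdgeLift p q s r t).PosDef := by
  refine PosDef.of_dotProduct_mulVec_pos ?_ fun x hx => ?_
  · ext i j
    fin_cases i <;> fin_cases j <;> simp [twoEdgeLift]
  rw [star_trivial, dotProduct_twoEdgeLift_mulVec]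
  have hΔ' : 0 < p * s - q ^ 2 := by linarith
  have hT' : 0 < (p + s + 2 * q) * t - 4 * r ^ 2 := by linarith
  by_cases h2 : x 2 = 0
  · by_cases h01 : x 0 = x 1
    · have hx1 : x 1 ≠ 0 := fun h1 => hx (funext fun i => by fin_cases i <;> simp [h01, h1, h2])
      have hL : (p + q) * x 0 + (q + s) * x 1 + 2 * r * x 2 = (p + s + 2 * q) * x 1 := by
        rw [h2, h01]; ring
      rw [hL, h01, h2, sub_self]
      linarith [pow_two_pos_of_ne_zero (mul_ne_zero hσ.ne' hx1)]
    · nlinarith [mul_pos hΔ' (pow_two_pos_of_ne_zero (sub_ne_zero.mpr h01))]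
  · nlinarith [mul_pos hT' (pow_two_pos_of_ne_zero h2)]

theorem quadratic_pos_of_forall_trace_pos {p q s r t : ℝ}
    (hD : ∀ K ∈ twoEdgeSubspace, K.PosSemidef → K ≠ 0 →
      0 < (K * twoEdgeMatrix p q s r t).trace)
    {x y z : ℝ} (hS : x = y ∨ z = 0) (h0 : x ≠ 0 ∨ y ≠ 0 ∨ z ≠ 0) :
    0 < p * x ^ 2 + 2 * q * x * y + s * y ^ 2 + 2 * r * (x + y) * z + t * z ^ 2 := by
  have hyz : y * z = x * z := by rcases hS with rfl | rfl <;> ring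
  have hK : vecMulVec ![x, y, z] ![x, y, z] =
      twoEdgeMatrix (x ^ 2) (x * y) (y ^ 2) (x * z) (z ^ 2) := by
    ext i j
    fin_cases i <;> fin_cases j <;> simp [vecMulVec, twoEdgeMatrix, sq, hyz, mul_comm]
  have hPSD : (twoEdgeMatrix (x ^ 2) (x * y) (y ^ 2) (x * z) (z ^ 2)).PosSemidef := by
    simpa [hK] using posSemidef_vecMulVec_self_star ![x, y, z]
  have hK0 : twoEdgeMatrix (x ^ 2) (x * y) (y ^ 2) (x * z) (z ^ 2) ≠ 0 := by
    intro h
    have := congrFun₂ h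
    simp [twoEdgeMatrix, Fin.forall_fin_succ] at this
    tauto
  have := hD _ (twoEdgeMatrix_mem _ _ _ _ _) hPSD hK0
  rw [trace_twoEdgeMatrix_mul_twoEdgeMatrix] at this
  linear_combination this - 2 * r * hyz

theorem forall_trace_pos_iff (p q s r t : ℝ) :
    (∀ K ∈ twoEdgeSubspace, K.PosSemidef → K ≠ 0 → 0 < (K * twoEdgeMatrix p q s r t).trace) ↔
      0 < p ∧ 0 < s ∧ 0 < t ∧ q ^ 2 < p * s ∧ 4 * r ^ 2 < (p + s + 2 * q) * t := by
  constructor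
  · intro hD
    have form_pos := @quadratic_pos_of_forall_trace_pos p q s r t hD
    have hp : 0 < p := by simpa using form_pos (x := 1) (y := 0) (z := 0) (by simp) (by simp)
    have hs : 0 < s := by simpa using form_pos (x := 0) (y := 1) (z := 0) (by simp) (by simp)
    have ht : 0 < t := by simpa using form_pos (x := 0) (y := 0) (z := 1) (by simp) (by simp)
    have hσ : 0 < p + s + 2 * q := by
      linarith [form_pos (x := 1) (y := 1) (z := 0) (by simp) (by simp)]
    -- the minimizers of the form on the lines `v₂ = 0` and `v₀ = v₁` respectively
    have hΔ : 0 < p * (p * s - q ^ 2) := by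
      linarith [form_pos (x := q) (y := -p) (z := 0) (by simp) (by simp [hp.ne'])]
    have hT : 0 < (p + s + 2 * q) * ((p + s + 2 * q) * t - 4 * r ^ 2) := by
      linarith [form_pos (x := 2 * r) (y := 2 * r) (z := -(p + s + 2 * q)) (by simp)
        (Or.inr (Or.inr (neg_ne_zero.mpr hσ.ne')))]
    exact ⟨hp, hs, ht, sub_pos.mp (pos_of_mul_pos_right hΔ hp.le),
      sub_pos.mp (pos_of_mul_pos_right hT hσ.le)⟩
  · rintro ⟨hp, hs, ht, hΔ, hT⟩ K hK hPSD hK0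
    have hσ : 0 < p + s + 2 * q := by nlinarith [sq_nonneg (p - s)]
    rw [mem_twoEdgeSubspace_iff] at hK
    rw [hK] at hPSD hK0 ⊢
    have := hPSD.trace_mul_pos hK0 (posDef_twoEdgeLift hσ hΔ hT)
    rw [trace_twoEdgeMatrix_mul_twoEdgeLift] at this
    exact pos_of_mul_pos_right this hσ.le

theorem dual_cone_triangle_two_edges :
    {D : Matrix (Fin 3) (Fin 3) ℝ | (D.IsSymm ∧ D 0 2 = D 1 2) ∧
        ∀ K ∈ closure {K : Matrix (Fin 3) (Fin 3) ℝ |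
            (K.IsSymm ∧ K 0 2 = K 1 2) ∧ K.PosDef},
          K ≠ 0 → 0 < (K * D).trace}
      = {D : Matrix (Fin 3) (Fin 3) ℝ | (D.IsSymm ∧ D 0 2 = D 1 2) ∧
          0 < D 0 0 ∧ 0 < D 1 1 ∧ 0 < D 2 2 ∧
          (D 0 1)^2 < D 0 0 * D 1 1 ∧
          4 * (D 0 2)^2 < (D 0 0 + D 1 1 + 2 * D 0 1) * D 2 2} := by
  have hcl : closure {K : Matrix (Fin 3) (Fin 3) ℝ | (K.IsSymm ∧ K 0 2 = K 1 2) ∧ K.PosDef} =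
      {K | K ∈ twoEdgeSubspace ∧ K.PosSemidef} :=
    closure_setOf_mem_and_posDef twoEdgeSubspace one_mem_twoEdgeSubspace
  rw [hcl]
  ext D
  simp only [Set.mem_ofPred_eq, and_imp]
  refine and_congr_right fun hD => ?_
  conv_lhs => rw [mem_twoEdgeSubspace_iff.mp hD]
  exact forall_trace_pos_iff _ _ _ _ _
end

section
/- The change of variables (r, s, t) ∈ (0,∞) × ℝⁿ × (0,∞) ↦ (a, b, c) = (r² + ‖s‖², t·s, t²) is a bijection onto {(a,b,c) : c > 0, a - ‖b‖²/c > 0} ⊂ ℝ × ℝⁿ × ℝ, with Jacobian determinant satisfying da db dc = 4 r t^{n+1} dr ds dt, and under it det l(a,b,c) = r² t^{2n}. -/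
open Matrix Real MeasureTheory

/-- The (n+1)×(n+1) arrow (star-graph) matrix. -/
def arrowMatrix (n : ℕ) (a c : ℝ) (b : Fin n → ℝ) : Matrix (Fin (n+1)) (Fin (n+1)) ℝ :=
  Matrix.of fun i j =>
    if hi : i = 0 then (if hj : j = 0 then a else b (j.pred hj))
    else (if hj : j = 0 then b (i.pred hi) else if i = j then c else 0)

/-- The Cholesky change of variables `(r, s, t) ↦ (a, b, c) = (r² + ‖s‖², t•s, t²)`. -/
def cholMap (n : ℕ) : ℝ × (Fin n → ℝ) × ℝ → ℝ × (Fin n → ℝ) × ℝ :=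
  fun y => (y.1^2 + ∑ j, (y.2.1 j)^2, fun j => y.2.2 * y.2.1 j, y.2.2^2)

def cholA (n : ℕ) (r t : ℝ) (s : Fin n → ℝ) : Matrix (Fin (n+1)) (Fin (n+1)) ℝ :=
  Matrix.of fun i j =>
    if hi : i = 0 then (if hj : j = 0 then r else s (j.pred hj))
    else if i = j then t else 0

lemma cholA_det (n : ℕ) (r t : ℝ) (s : Fin n → ℝ) : (cholA n r t s).det = r * t ^ n := by
  rw [Matrix.det_of_upperTriangular]
  · have : ∀ i : Fin (n+1), (cholA n r t s) i i = if i = 0 then r else t := by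
      intro i
      by_cases hi : i = 0 <;> simp [cholA, hi]
    rw [Finset.prod_congr rfl (fun i _ => this i)]
    rw [Fin.prod_univ_succ]
    simp [Fin.succ_ne_zero]
  · intro i j hij
    have hi : i ≠ 0 := Fin.pos_iff_ne_zero.mp (lt_of_le_of_lt (Fin.zero_le j) hij)
    simp only [cholA, Matrix.of_apply, dif_neg hi, if_neg (show i ≠ j from hij.ne')]
lemma arrow_eq (n : ℕ) (r t : ℝ) (s : Fin n → ℝ) :
    arrowMatrix n (r^2 + ∑ j, s j ^ 2) (t^2) (fun j => t * s j)
      = cholA n r t s * (cholA n r t s)ᵀ := by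
  ext i j
  rw [Matrix.mul_apply]
  by_cases hi : i = 0 <;> by_cases hj : j = 0
  · subst hi; subst hj
    simp [arrowMatrix, cholA, Fin.sum_univ_succ, sq, Fin.succ_ne_zero]
  · subst hi
    rw [Finset.sum_eq_single j]
    · simp [arrowMatrix, cholA, hj, mul_comm]
    · intro k _ hk
      simp only [cholA, transpose_apply, Matrix.of_apply, dif_neg hj, if_neg (Ne.symm hk)]
      ring
    · simp
  · subst hj
    rw [Finset.sum_eq_single i]
    · simp [arrowMatrix, cholA, hi, mul_comm]
    · intro k _ hk
      simp only [cholA, transpose_apply, Matrix.of_apply, dif_neg hi, if_neg (Ne.symm hk)]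
      ring
    · simp
  · rw [Finset.sum_eq_single i]
    · by_cases hij : i = j
      · subst hij; simp [arrowMatrix, cholA, hi, sq]
      · simp [arrowMatrix, cholA, hi, hj, hij, Ne.symm hij]
    · intro k _ hk
      simp only [cholA, transpose_apply, Matrix.of_apply, dif_neg hi, if_neg (Ne.symm hk)]
      ring
    · simp

section deriv
variable (n : ℕ)

abbrev E (n : ℕ) := ℝ × (Fin n → ℝ) × ℝ

noncomputable def Lr : E n →L[ℝ] ℝ := ContinuousLinearMap.fst ℝ ℝ ((Fin n → ℝ) × ℝ)
noncomputable def Ls (j : Fin n) : E n →L[ℝ] ℝ :=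
  (ContinuousLinearMap.proj j).comp ((ContinuousLinearMap.fst ℝ (Fin n → ℝ) ℝ).comp
    (ContinuousLinearMap.snd ℝ ℝ ((Fin n → ℝ) × ℝ)))
noncomputable def Lt : E n →L[ℝ] ℝ :=
  (ContinuousLinearMap.snd ℝ (Fin n → ℝ) ℝ).comp (ContinuousLinearMap.snd ℝ ℝ ((Fin n → ℝ) × ℝ))

noncomputable def cholDeriv (y : E n) : E n →L[ℝ] E n :=
  ((2 * y.1) • Lr n + ∑ j, (2 * y.2.1 j) • Ls n j).prod
    ((ContinuousLinearMap.pi fun j => y.2.2 • Ls n j + (y.2.1 j) • Lt n).prod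
      ((2 * y.2.2) • Lt n))

lemma cholDeriv_apply (y v : E n) :
    cholDeriv n y v = (2 * y.1 * v.1 + ∑ j, 2 * y.2.1 j * v.2.1 j,
      fun j => y.2.2 * v.2.1 j + y.2.1 j * v.2.2, 2 * y.2.2 * v.2.2) := by
  simp [cholDeriv, Lr, Ls, Lt, smul_eq_mul]

lemma hasFDerivAt_cholMap (y : E n) : HasFDerivAt (cholMap n) (cholDeriv n y) y := by
  have hr : HasFDerivAt (fun v : E n => v.1) (Lr n) y := (Lr n).hasFDerivAt
  have hs : ∀ j, HasFDerivAt (fun v : E n => v.2.1 j) (Ls n j) y := fun j => (Ls n j).hasFDerivAt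
  have ht : HasFDerivAt (fun v : E n => v.2.2) (Lt n) y := (Lt n).hasFDerivAt
  have ha : HasFDerivAt (fun v : E n => v.1 ^ 2 + ∑ j, (v.2.1 j)^2)
      ((2 * y.1) • Lr n + ∑ j, (2 * y.2.1 j) • Ls n j) y := by
    have h1 := hr.mul hr
    have h2 := HasFDerivAt.fun_sum (fun j (_ : j ∈ Finset.univ) => (hs j).mul (hs j))
    have h3 := h1.add h2
    simp only [← pow_two] at h3
    refine h3.congr_fderiv ?_
    refine ContinuousLinearMap.ext fun v => ?_
    simp [Lr, Ls, two_mul, add_mul, Finset.sum_add_distrib]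
  have hb : HasFDerivAt (fun v : E n => fun j => v.2.2 * v.2.1 j)
      (ContinuousLinearMap.pi fun j => y.2.2 • Ls n j + (y.2.1 j) • Lt n) y := by
    apply hasFDerivAt_pi.2
    intro j
    exact ht.mul (hs j)
  have hc : HasFDerivAt (fun v : E n => v.2.2 ^ 2) ((2 * y.2.2) • Lt n) y := by
    have h1 := ht.mul ht
    simp only [← pow_two] at h1
    refine h1.congr_fderiv ?_
    refine ContinuousLinearMap.ext fun v => ?_
    simp [Lt, two_mul]
    ring
  exact ha.prodMk (hb.prodMk hc)

end deriv

noncomputable def bE : Module.Basis (Unit ⊕ (Fin n ⊕ Unit)) ℝ (E n) :=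
  (Module.Basis.singleton Unit ℝ).prod ((Pi.basisFun ℝ (Fin n)).prod (Module.Basis.singleton Unit ℝ))

noncomputable def cholMat (y : E n) : Matrix (Unit ⊕ (Fin n ⊕ Unit)) (Unit ⊕ (Fin n ⊕ Unit)) ℝ :=
  Matrix.fromBlocks (Matrix.of fun _ _ => 2 * y.1)
    (Matrix.of fun _ j => Sum.elim (fun k => 2 * y.2.1 k) (fun _ => 0) j)
    0
    (Matrix.fromBlocks (y.2.2 • 1) (Matrix.of fun j _ => y.2.1 j) 0 (Matrix.of fun _ _ => 2 * y.2.2))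

lemma cholDeriv_eq_toLin (y : E n) :
    (cholDeriv n y : E n →ₗ[ℝ] E n) = Matrix.toLin (bE (n:=n)) (bE (n:=n)) (cholMat y) := by
  apply (bE (n:=n)).ext
  intro i
  rw [Matrix.toLin_self]
  have happ : ∀ v : E n, (cholDeriv n y : E n →ₗ[ℝ] E n) v = cholDeriv n y v := fun _ => rfl
  rcases i with _ | (j | _) <;>
    rw [happ, cholDeriv_apply] <;>
    simp [bE, cholMat, Module.Basis.prod_apply, Fintype.sum_sum_type, Pi.basisFun_apply,
      Prod.ext_iff, Finset.sum_ite_eq, funext_iff, Matrix.one_apply,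
      Prod.fst_sum, Prod.snd_sum, Finset.sum_apply, Pi.single_apply, mul_ite,
      Finset.sum_ite_eq, Finset.sum_ite_eq', apply_ite]
  intro x
  by_cases h : x = j <;> simp [h]

lemma cholMat_det (y : E n) : (cholMat y).det = 4 * y.1 * y.2.2^(n+1) := by
  rw [cholMat, Matrix.det_fromBlocks_zero₂₁, Matrix.det_fromBlocks_zero₂₁]
  simp [Matrix.det_unique, Matrix.det_smul]
  ring

lemma cholDeriv_det (y : E n) : (cholDeriv n y).det = 4 * y.1 * y.2.2^(n+1) := by
  rw [ContinuousLinearMap.det, cholDeriv_eq_toLin, LinearMap.det_toLin, cholMat_det]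

lemma chol_bijOn :
    Set.BijOn (cholMap n) (Set.Ioi (0:ℝ) ×ˢ (Set.univ ×ˢ Set.Ioi (0:ℝ)))
      {x : E n | 0 < x.2.2 ∧ 0 < x.1 - (∑ j, (x.2.1 j)^2) / x.2.2} := by
  constructor
  · rintro ⟨r, s, t⟩ ⟨hr, -, ht⟩
    simp only [Set.mem_Ioi] at hr ht
    have ht2 : (0:ℝ) < t^2 := by positivity
    refine ⟨ht2, ?_⟩
    have : ∑ j, (t * s j)^2 = t^2 * ∑ j, (s j)^2 := by
      rw [Finset.mul_sum]; congr 1; ext j; ring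
    simp only [cholMap, Set.mem_setOf_eq]
    rw [this, mul_div_cancel_left₀ _ ht2.ne']
    simpa using pow_pos hr 2
  constructor
  · rintro ⟨r, s, t⟩ ⟨hr, -, ht⟩ ⟨r', s', t'⟩ ⟨hr', -, ht'⟩ heq
    simp only [Set.mem_Ioi] at hr ht hr' ht'
    simp only [cholMap, Prod.mk.injEq, funext_iff] at heq
    obtain ⟨h1, h2, h3⟩ := heq
    have htt : t = t' := by nlinarith [sq_nonneg (t - t'), sq_nonneg (t + t')]
    have hss : s = s' := by
      funext j
      have := h2 j
      rw [htt] at this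
      exact mul_left_cancel₀ ht'.ne' this
    have hrr : r = r' := by
      rw [hss] at h1
      have : r^2 = r'^2 := by linarith
      nlinarith [sq_nonneg (r - r'), sq_nonneg (r + r')]
    simp [htt, hss, hrr]
  · rintro ⟨a, b, c⟩ ⟨hc, hx⟩
    simp only [Set.mem_setOf_eq] at hc hx
    refine ⟨(Real.sqrt (a - (∑ j, (b j)^2) / c), fun j => b j / Real.sqrt c, Real.sqrt c),
      ⟨?_, trivial, ?_⟩, ?_⟩
    · exact Real.sqrt_pos.2 hx
    · exact Real.sqrt_pos.2 hc
    · have hsc : Real.sqrt c > 0 := Real.sqrt_pos.2 hc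
      have hsq : Real.sqrt c ^ 2 = c := Real.sq_sqrt hc.le
      simp only [cholMap, Prod.mk.injEq]
      refine ⟨?_, ?_, hsq⟩
      · rw [Real.sq_sqrt hx.le]
        have : ∑ j, (b j / Real.sqrt c)^2 = (∑ j, (b j)^2) / c := by
          rw [Finset.sum_div]; congr 1; ext j; rw [div_pow, hsq]
        rw [this]; ring
      · funext j
        exact mul_div_cancel₀ _ hsc.ne'

lemma chol_integral (f : E n → ℝ) :
    ∫ x in {x : E n | 0 < x.2.2 ∧ 0 < x.1 - (∑ j, (x.2.1 j)^2) / x.2.2}, f x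
      = ∫ y in Set.Ioi (0:ℝ) ×ˢ (Set.univ ×ˢ Set.Ioi (0:ℝ)),
          4 * y.1 * y.2.2^(n+1) * f (cholMap n y) := by
  have h1 : (volume : Measure ((Fin n → ℝ) × ℝ)).IsAddHaarMeasure :=
    MeasureTheory.Measure.prod.instIsAddHaarMeasure _ _
  have : (volume : Measure (E n)).IsAddHaarMeasure :=
    MeasureTheory.Measure.prod.instIsAddHaarMeasure _ _
  have hS : MeasurableSet (Set.Ioi (0:ℝ) ×ˢ ((Set.univ : Set (Fin n → ℝ)) ×ˢ Set.Ioi (0:ℝ))) :=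
    measurableSet_Ioi.prod (MeasurableSet.univ.prod measurableSet_Ioi)
  rw [← (chol_bijOn (n:=n)).image_eq]
  rw [integral_image_eq_integral_abs_det_fderiv_smul volume hS
    (fun y _ => (hasFDerivAt_cholMap n y).hasFDerivWithinAt) (chol_bijOn (n:=n)).injOn f]
  apply setIntegral_congr_fun hS
  rintro ⟨r, s, t⟩ ⟨hr, -, ht⟩
  simp only [Set.mem_Ioi] at hr ht
  simp only [cholDeriv_det, smul_eq_mul]
  rw [abs_of_pos (by positivity)]


theorem cholesky_change_of_variables (n : ℕ) :
    -- bijectivity onto the cone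
    (Set.BijOn (cholMap n)
        (Set.Ioi (0:ℝ) ×ˢ (Set.univ ×ˢ Set.Ioi (0:ℝ)))
        {x : ℝ × (Fin n → ℝ) × ℝ | 0 < x.2.2 ∧
          0 < x.1 - (∑ j, (x.2.1 j)^2) / x.2.2}) ∧
    -- Jacobian: `da db dc = 4 r t^(n+1) dr ds dt`
    (∀ f : ℝ × (Fin n → ℝ) × ℝ → ℝ,
      ∫ x in {x : ℝ × (Fin n → ℝ) × ℝ | 0 < x.2.2 ∧
          0 < x.1 - (∑ j, (x.2.1 j)^2) / x.2.2}, f x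
        = ∫ y in Set.Ioi (0:ℝ) ×ˢ (Set.univ ×ˢ Set.Ioi (0:ℝ)),
            4 * y.1 * y.2.2^(n+1) * f (cholMap n y)) ∧
    -- determinant in the new coordinates
    (∀ y ∈ Set.Ioi (0:ℝ) ×ˢ (Set.univ ×ˢ Set.Ioi (0:ℝ)),
      (arrowMatrix n (cholMap n y).1 (cholMap n y).2.2 (cholMap n y).2.1).det
        = y.1^2 * y.2.2^(2*n)) := by
  refine ⟨chol_bijOn (n:=n), chol_integral (n:=n), ?_⟩
  rintro ⟨r, s, t⟩ -
  show (arrowMatrix n (r^2 + ∑ j, s j ^ 2) (t^2) (fun j => t * s j)).det = _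
  rw [arrow_eq, Matrix.det_mul, Matrix.det_transpose, cholA_det]
  rw [show 2 * n = n * 2 from mul_comm 2 n, pow_mul]
  ring
end
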